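/- arXiv:2504.10917 — 3 statements merged into one kernel-verified Lean document; each statement's English description precedes it below -/
import Mathlib

section
/- For every integer d ≥ 3, if two non-isomorphic finite simple graphs without isolated vertices can be distinguished by the 1-WL test, then they can be distinguished by the RW(d)-SEG-WL test. -/
open scoped Classical

noncomputable section

/-- Color types for 1-WL (color refinement): the color at iteration `t+1` is a pair of the
previous color and the multiset of previous colors of the neighbors. -/
def WLColorType : ℕ → Type
  | 0 => Unit
  | t + 1 => WLColorType t × Multiset (WLColorType t)

/-- 1-WL (color refinement) vertex colors. -/
def wlColor {V : Type} [Fintype V] (G : SimpleGraph V) : (t : ℕ) → V → WLColorType t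
  | 0, _ => ()
  | t + 1, v => (wlColor G t v, (G.neighborFinset v).val.map (wlColor G t))

/-- The 1-WL test distinguishes two finite simple graphs if at some iteration the multisets of
vertex colors of the two graphs differ. -/
def wlDistinguishes {V W : Type} [Fintype V] [Fintype W]
    (G : SimpleGraph V) (H : SimpleGraph W) : Prop :=
  ∃ t, Finset.univ.val.map (wlColor G t) ≠ Finset.univ.val.map (wlColor H t)

/-- Color types for the SEG-WL test with node encodings in `X` and edge encodings in `Y`. -/
def SEGColorType (X Y : Type) : ℕ → Type
  | 0 => X
  | t + 1 => Multiset (SEGColorType X Y t × Y)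

/-- SEG-WL vertex colors: `g_0 v = f_P v` and
`g_{t+1} v = {{(g_t u, f_R v u) : u ∈ V}}`. -/
def segColor {V X Y : Type} [Fintype V] (fP : V → X) (fR : V → V → Y) :
    (t : ℕ) → V → SEGColorType X Y t
  | 0, v => fP v
  | t + 1, v => Finset.univ.val.map fun u => (segColor fP fR t u, fR v u)

/-- The SEG-WL test (with given encodings on the two graphs) distinguishes them if at some
iteration the multisets of vertex colors differ. -/
def segDistinguishes {V W X Y : Type} [Fintype V] [Fintype W]
    (fP : V → X) (fR : V → V → Y) (fP' : W → X) (fR' : W → W → Y) : Prop :=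
  ∃ t, Finset.univ.val.map (segColor fP fR t) ≠ Finset.univ.val.map (segColor fP' fR' t)

/-- The random-walk matrix `M = D⁻¹ A` of a simple graph:
`M i j = A i j / deg i`. -/
def rwMatrix {V : Type} [Fintype V] (G : SimpleGraph V) : Matrix V V ℝ :=
  Matrix.of fun i j => (if G.Adj i j then (1 : ℝ) else 0) / (G.degree i : ℝ)

/-- Node-level random-walk encoding `P_i = ((M^0)_{ii}, …, (M^{d-1})_{ii})`. -/
def rwP {V : Type} [Fintype V] [DecidableEq V] (G : SimpleGraph V) (d : ℕ) (i : V) :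
    Fin d → ℝ :=
  fun k => (rwMatrix G ^ (k : ℕ)) i i

/-- Edge-level random-walk encoding `R_{ij} = ((M^0)_{ij}, …, (M^{d-1})_{ij})`. -/
def rwR {V : Type} [Fintype V] [DecidableEq V] (G : SimpleGraph V) (d : ℕ) (i j : V) :
    Fin d → ℝ :=
  fun k => (rwMatrix G ^ (k : ℕ)) i j

/-- The RW(d)-SEG-WL test: SEG-WL with `f_P v_i = P_i` and `f_R v_i v_j = R_{ij}`. -/
def rwSegDistinguishes {V W : Type} [Fintype V] [Fintype W] [DecidableEq V] [DecidableEq W]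
    (d : ℕ) (G : SimpleGraph V) (H : SimpleGraph W) : Prop :=
  segDistinguishes (rwP G d) (rwR G d) (rwP H d) (rwR H d)


/-- If two functions `f₁, f₂` determine `g₁, g₂` pairwise across two multisets, then equality
of the `f`-images implies equality of the `g`-images. -/
lemma multiset_map_det {α β γ δ : Type*} (f₁ : α → γ) (f₂ : β → γ) (g₁ : α → δ) (g₂ : β → δ) :
    ∀ (s : Multiset α) (t : Multiset β),
      (∀ a ∈ s, ∀ b ∈ t, f₁ a = f₂ b → g₁ a = g₂ b) →
      s.map f₁ = t.map f₂ → s.map g₁ = t.map g₂ := by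
  intro s
  induction s using Multiset.induction_on with
  | empty =>
    intro t h hmap
    have ht : t = 0 := Multiset.map_eq_zero.mp hmap.symm
    simp [ht]
  | cons a s ih =>
    intro t h hmap
    have hmem : f₁ a ∈ t.map f₂ := by
      rw [← hmap]; simp
    obtain ⟨b, hb, hfb⟩ := Multiset.mem_map.mp hmem
    have ht : t = b ::ₘ t.erase b := (Multiset.cons_erase hb).symm
    rw [ht] at hmap ⊢
    simp only [Multiset.map_cons] at hmap ⊢
    rw [hfb] at hmap
    have htail := (Multiset.cons_inj_right _).mp hmap
    have hg : g₁ a = g₂ b := h a (Multiset.mem_cons_self a s) b hb hfb.symm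
    rw [hg]
    rw [(Multiset.cons_inj_right _)]
    exact ih _ (fun a' ha' b' hb' => h a' (Multiset.mem_cons_of_mem ha') b'
      (Multiset.mem_of_mem_erase hb')) htail

lemma rwR_zero {V : Type} [Fintype V] [DecidableEq V] (G : SimpleGraph V) (d : ℕ) (hd : 0 < d)
    (v u : V) : rwR G d v u ⟨0, hd⟩ = if v = u then 1 else 0 := by
  simp [rwR, Matrix.one_apply]

lemma rwR_one_ne_zero {V : Type} [Fintype V] [DecidableEq V] (G : SimpleGraph V) (d : ℕ)
    (hd : 1 < d) (v u : V) (hdeg : (G.degree v : ℝ) ≠ 0) :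
    rwR G d v u ⟨1, hd⟩ ≠ 0 ↔ G.Adj v u := by
  have : rwR G d v u ⟨1, hd⟩ = (if G.Adj v u then (1 : ℝ) else 0) / (G.degree v : ℝ) := by
    simp [rwR, rwMatrix]
  rw [this]
  by_cases h : G.Adj v u <;> simp [h, hdeg]

lemma deg_ne_zero {V : Type} [Fintype V] [DecidableEq V] (G : SimpleGraph V)
    (hG : ∀ v, ∃ u, G.Adj v u) (v : V) : (G.degree v : ℝ) ≠ 0 := by
  have : 0 < G.degree v := G.degree_pos_iff_exists_adj v |>.mpr (hG v)
  exact_mod_cast this.ne'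

/-- Cross-graph refinement: equal RW-SEG-WL colors imply equal 1-WL colors. -/
lemma seg_imp_wl (d : ℕ) (hd : 3 ≤ d)
    {V W : Type} [Fintype V] [Fintype W] [DecidableEq V] [DecidableEq W]
    (G : SimpleGraph V) (H : SimpleGraph W)
    (hG : ∀ v, ∃ u, G.Adj v u) (hH : ∀ w, ∃ u, H.Adj w u) :
    ∀ t (v : V) (w : W),
      segColor (rwP G d) (rwR G d) t v = segColor (rwP H d) (rwR H d) t w →
      wlColor G t v = wlColor H t w := by
  have h0d : 0 < d := by omega
  have h1d : 1 < d := by omega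
  intro t
  induction t with
  | zero => intro v w _; rfl
  | succ t ih =>
    intro v w h
    have h' : Finset.univ.val.map (fun u => (wlColor G t u, rwR G d v u)) =
        Finset.univ.val.map (fun u' => (wlColor H t u', rwR H d w u')) := by
      refine multiset_map_det (fun u => (segColor (rwP G d) (rwR G d) t u, rwR G d v u))
        (fun u' => (segColor (rwP H d) (rwR H d) t u', rwR H d w u')) _ _ _ _ ?_ h
      intro a _ b _ hab
      have h1 := congrArg Prod.fst hab
      have h2 := congrArg Prod.snd hab
      simp only at h1 h2
      exact Prod.ext (ih a b h1) h2
    -- Step A: wlColor G t v = wlColor H t w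
    have hvw : wlColor G t v = wlColor H t w := by
      have hmem : (wlColor G t v, rwR G d v v) ∈
          Finset.univ.val.map (fun u' => (wlColor H t u', rwR H d w u')) := by
        rw [← h']
        exact Multiset.mem_map.mpr ⟨v, Finset.mem_univ v, rfl⟩
      obtain ⟨u', _, hu'⟩ := Multiset.mem_map.mp hmem
      have hR : rwR H d w u' ⟨0, h0d⟩ = rwR G d v v ⟨0, h0d⟩ :=
        congrFun (congrArg Prod.snd hu') ⟨0, h0d⟩
      rw [rwR_zero G d h0d, rwR_zero H d h0d] at hR
      simp only [if_pos rfl] at hR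
      have hwu' : w = u' := by
        by_contra hne
        rw [if_neg hne] at hR
        exact zero_ne_one hR
      have := congrArg Prod.fst hu'
      simp only at this
      rw [← this, ← hwu']
    -- Step B: neighbor multisets
    have hnbr : (G.neighborFinset v).val.map (wlColor G t) =
        (H.neighborFinset w).val.map (wlColor H t) := by
      have hfil := congrArg (fun m : Multiset (WLColorType t × (Fin d → ℝ)) =>
        (m.filter (fun p => p.2 ⟨1, h1d⟩ ≠ 0)).map Prod.fst) h'
      simp only [Multiset.filter_map, Multiset.map_map, Function.comp] at hfil
      have hG1 : Multiset.filter
          (fun u => rwR G d v u ⟨1, h1d⟩ ≠ 0) Finset.univ.val = (G.neighborFinset v).val := by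
        rw [SimpleGraph.neighborFinset_eq_filter, Finset.filter_val]
        apply Multiset.filter_congr
        intro u _
        exact rwR_one_ne_zero G d h1d v u (deg_ne_zero G hG v)
      have hH1 : Multiset.filter
          (fun u => rwR H d w u ⟨1, h1d⟩ ≠ 0) Finset.univ.val = (H.neighborFinset w).val := by
        rw [SimpleGraph.neighborFinset_eq_filter, Finset.filter_val]
        apply Multiset.filter_congr
        intro u _
        exact rwR_one_ne_zero H d h1d w u (deg_ne_zero H hH w)
      rw [hG1, hH1] at hfil
      exact hfil
    show (wlColor G t v, (G.neighborFinset v).val.map (wlColor G t)) =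
      (wlColor H t w, (H.neighborFinset w).val.map (wlColor H t))
    exact Prod.ext hvw hnbr

/-- For every integer `d ≥ 3`, if two non-isomorphic finite simple graphs without isolated
vertices can be distinguished by the 1-WL test, then they can be distinguished by the
RW(d)-SEG-WL test. -/
theorem oneWL_distinguishes_imp_rwSegWL_distinguishes (d : ℕ) (hd : 3 ≤ d)
    (V W : Type) [Fintype V] [Fintype W] [DecidableEq V] [DecidableEq W]
    (G : SimpleGraph V) (H : SimpleGraph W)
    (hG : ∀ v, ∃ u, G.Adj v u) (hH : ∀ w, ∃ u, H.Adj w u)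
    (hiso : ¬ Nonempty (G ≃g H)) (hwl : wlDistinguishes G H) :
    rwSegDistinguishes d G H := by
  obtain ⟨t, hne⟩ := hwl
  refine ⟨t, fun hseg => hne ?_⟩
  exact multiset_map_det (segColor (rwP G d) (rwR G d) t) (segColor (rwP H d) (rwR H d) t)
    (wlColor G t) (wlColor H t) _ _
    (fun v _ w _ h => seg_imp_wl d hd G H hG hH t v w h) hseg

end
end

section
/- For integers 1 ≤ d ≤ d', if two finite simple graphs without isolated vertices can be distinguished by the RW(d)-SEG-WL test, then they can be distinguished by the RW(d')-SEG-WL test. -/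
open scoped Classical

noncomputable section

def mapSEG {X Y X' Y' : Type} (τ : X' → X) (σ : Y' → Y) :
    (t : ℕ) → SEGColorType X' Y' t → SEGColorType X Y t
  | 0, x => τ x
  | t + 1, m => m.map fun p => (mapSEG τ σ t p.1, σ p.2)

theorem segColor_map {V X Y X' Y' : Type} [Fintype V] (τ : X' → X) (σ : Y' → Y)
    (fP : V → X') (fR : V → V → Y') (t : ℕ) (v : V) :
    segColor (fun v => τ (fP v)) (fun v u => σ (fR v u)) t v =
      mapSEG τ σ t (segColor fP fR t v) := by
  induction t generalizing v with
  | zero => rfl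
  | succ t ih =>
    show Multiset.map _ Finset.univ.val = Multiset.map _ (Multiset.map _ Finset.univ.val)
    rw [Multiset.map_map]
    exact congrArg (fun f => Multiset.map f Finset.univ.val)
      (funext fun u => by simp [Function.comp, ih])

/-- For integers `1 ≤ d ≤ d'`, if two finite simple graphs without isolated vertices can be
distinguished by the RW(d)-SEG-WL test, then they can be distinguished by the
RW(d')-SEG-WL test. -/
theorem rwSegWL_mono (d d' : ℕ) (hd : 1 ≤ d) (hdd : d ≤ d')
    (V W : Type) [Fintype V] [Fintype W] [DecidableEq V] [DecidableEq W]
    (G : SimpleGraph V) (H : SimpleGraph W)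
    (hG : ∀ v, ∃ u, G.Adj v u) (hH : ∀ w, ∃ u, H.Adj w u)
    (h : rwSegDistinguishes d G H) :
    rwSegDistinguishes d' G H := by
  obtain ⟨t, ht⟩ := h
  refine ⟨t, fun heq => ht ?_⟩
  have key : ∀ (U : Type) [Fintype U] [DecidableEq U] (K : SimpleGraph U),
      segColor (rwP K d) (rwR K d) t =
        fun v => mapSEG
          (fun (f : Fin d' → ℝ) (k : Fin d) => f ⟨k, lt_of_lt_of_le k.2 hdd⟩)
          (fun (f : Fin d' → ℝ) (k : Fin d) => f ⟨k, lt_of_lt_of_le k.2 hdd⟩) t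
          (segColor (rwP K d') (rwR K d') t v) := by
    intro U _ _ K
    funext v
    have := segColor_map (V := U)
      (fun f : Fin d' → ℝ => fun k : Fin d => f ⟨k, lt_of_lt_of_le k.2 hdd⟩)
      (fun f : Fin d' → ℝ => fun k : Fin d => f ⟨k, lt_of_lt_of_le k.2 hdd⟩)
      (rwP K d') (rwR K d') t v
    exact this
  rw [key V G, key W H, ← Function.comp_def, ← Function.comp_def,
    ← Multiset.map_map, ← Multiset.map_map, heq]

end
end

section
/- There exist parameters (n, k, λ, μ) and two non-isomorphic strongly regular graphs G and H, both with parameters (n, k, λ, μ), such that the RW(4)-SEG-WL test does not distinguish G from H. -/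
open scoped Classical

noncomputable section

section Aux
open SimpleGraph Finset

/-! ### Auxiliary material: a pair of SRG(16,6,2,2) graphs and general SEG-WL lemmas -/

/-- Adjacency of the 4×4 rook's graph on `Fin 16`. -/
def rookAdj (i j : Fin 16) : Bool :=
  (decide (i ≠ j)) && (i.val / 4 == j.val / 4 || i.val % 4 == j.val % 4)

/-- Adjacency of the Shrikhande graph on `Fin 16`. -/
def shrAdj (i j : Fin 16) : Bool :=
  let dx := (i.val / 4 + 4 - j.val / 4) % 4
  let dy := (i.val % 4 + 4 - j.val % 4) % 4
  ((dx == 0) && (dy == 1 || dy == 3)) || ((dy == 0) && (dx == 1 || dx == 3)) ||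
    (dx == 1 && dy == 1) || (dx == 3 && dy == 3)

def rookG : SimpleGraph (Fin 16) where
  Adj i j := rookAdj i j = true
  symm := ⟨by decide⟩
  loopless := ⟨by decide⟩

def shrG : SimpleGraph (Fin 16) where
  Adj i j := shrAdj i j = true
  symm := ⟨by decide⟩
  loopless := ⟨by decide⟩

instance : DecidableRel rookG.Adj := fun _ _ => inferInstanceAs (Decidable (_ = true))
instance : DecidableRel shrG.Adj := fun _ _ => inferInstanceAs (Decidable (_ = true))

theorem rook_srg : rookG.IsSRGWith 16 6 2 2 := by
  refine ⟨by decide, ?_, by decide, ?_⟩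
  · unfold SimpleGraph.IsRegularOfDegree; decide
  · unfold Pairwise; decide

theorem shr_srg : shrG.IsSRGWith 16 6 2 2 := by
  refine ⟨by decide, ?_, by decide, ?_⟩
  · unfold SimpleGraph.IsRegularOfDegree; decide
  · unfold Pairwise; decide

/-- The Shrikhande graph has no 4-clique. -/
theorem shr_noK4 : ∀ a b : Fin 16, shrG.Adj a b → ∀ c, shrG.Adj a c → shrG.Adj b c →
    ∀ d, shrG.Adj a d → shrG.Adj b d → shrG.Adj c d → False := by decide

variable {V : Type} [Fintype V] [DecidableEq V] {G : SimpleGraph V} [DecidableRel G.Adj]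

lemma sq_entry (G : SimpleGraph V) [DecidableRel G.Adj] (i j : V) :
    (G.adjMatrix ℝ * G.adjMatrix ℝ) i j = (Fintype.card (G.commonNeighbors i j) : ℝ) := by
  rw [adjMatrix_mul_apply]
  rw [← Set.toFinset_card]
  have : (G.commonNeighbors i j).toFinset = (G.neighborFinset i).filter (fun u => G.Adj u j) := by
    ext u
    simp [mem_commonNeighbors, adj_comm]
  rw [this, ← Finset.sum_boole]
  simp

lemma A2_entry (hreg : G.IsRegularOfDegree 6)
    (hcn : ∀ i j : V, i ≠ j → Fintype.card (G.commonNeighbors i j) = 2) (i j : V) :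
    (G.adjMatrix ℝ ^ 2) i j = if i = j then 6 else 2 := by
  rw [pow_two, sq_entry]
  split_ifs with h
  · subst h
    have hs : G.commonNeighbors i i = G.neighborSet i := by
      ext u; simp [mem_commonNeighbors]
    rw [Fintype.card_congr (Equiv.setCongr hs), card_neighborSet_eq_degree, hreg i]; norm_num
  · rw [hcn i j h]; norm_num

lemma A3_entry (hreg : G.IsRegularOfDegree 6)
    (hcn : ∀ i j : V, i ≠ j → Fintype.card (G.commonNeighbors i j) = 2) (i j : V) :
    (G.adjMatrix ℝ ^ 3) i j = if G.Adj i j then 16 else 12 := by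
  rw [pow_succ', adjMatrix_mul_apply]
  have h1 : ∀ u ∈ G.neighborFinset i, (G.adjMatrix ℝ ^ 2) u j
      = 2 + (if u = j then (4:ℝ) else 0) := by
    intro u _
    rw [A2_entry hreg hcn]
    split_ifs <;> norm_num
  rw [Finset.sum_congr rfl h1, Finset.sum_add_distrib, Finset.sum_const,
    G.card_neighborFinset_eq_degree i, hreg i, Finset.sum_ite_eq' (G.neighborFinset i) j]
  by_cases hadj : G.Adj i j
  · rw [if_pos ((G.mem_neighborFinset i j).2 hadj), if_pos hadj]; norm_num
  · rw [if_neg (fun hc => hadj ((G.mem_neighborFinset i j).1 hc)), if_neg hadj]; norm_num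

/-- The table of possible `R`-values for an SRG(16,6,2,2). -/
def psi (c : Fin 3) (k : Fin 4) : ℝ :=
  if k = 0 then (if c = 0 then 1 else 0)
  else if k = 1 then (if c = 1 then 1/6 else 0)
  else if k = 2 then (if c = 0 then 1/6 else 1/18)
  else (if c = 0 then 1/18 else if c = 1 then 2/27 else 1/18)

/-- Classification of a pair of vertices: equal / adjacent / distinct non-adjacent. -/
def cls (G : SimpleGraph V) [DecidableRel G.Adj] (i j : V) : Fin 3 :=
  if i = j then 0 else if G.Adj i j then 1 else 2

lemma rwMatrix_eq (G : SimpleGraph V) [DecidableRel G.Adj] (hreg : G.IsRegularOfDegree 6) :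
    rwMatrix G = (6 : ℝ)⁻¹ • G.adjMatrix ℝ := by
  ext i j
  have hdeg : ∀ (inst : Fintype (G.neighborSet i)), @SimpleGraph.degree V G i inst = 6 := by
    intro inst
    rw [Subsingleton.elim inst (G.neighborSetFintype i)]
    exact hreg i
  simp only [rwMatrix, Matrix.of_apply, Matrix.smul_apply, adjMatrix_apply, smul_eq_mul, hdeg]
  split_ifs <;> norm_num

lemma rwR_eq (hreg : G.IsRegularOfDegree 6)
    (hcn : ∀ i j : V, i ≠ j → Fintype.card (G.commonNeighbors i j) = 2) (i j : V) :
    rwR G 4 i j = psi (cls G i j) := by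
  funext k
  show (rwMatrix G ^ (k : ℕ)) i j = _
  rw [rwMatrix_eq G hreg, smul_pow]
  rcases k with ⟨kv, hk⟩
  interval_cases kv
  · rw [show ((⟨0, hk⟩ : Fin 4) : ℕ) = 0 from rfl, pow_zero, pow_zero, one_smul,
      Matrix.one_apply]
    by_cases h : i = j <;> by_cases h2 : G.Adj i j <;> simp [psi, cls, h, h2]
  · rw [show ((⟨1, hk⟩ : Fin 4) : ℕ) = 1 from rfl, pow_one, pow_one, Matrix.smul_apply,
      adjMatrix_apply, smul_eq_mul]
    by_cases h : i = j
    · simp [psi, cls, h, (by rw [h]; exact G.loopless.irrefl j : ¬ G.Adj i j)]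
    · by_cases h2 : G.Adj i j <;> simp [psi, cls, h, h2] <;> norm_num
  · rw [show ((⟨2, hk⟩ : Fin 4) : ℕ) = 2 from rfl, Matrix.smul_apply,
      A2_entry hreg hcn, smul_eq_mul]
    by_cases h : i = j
    · simp [psi, cls, h]; norm_num
    · by_cases h2 : G.Adj i j <;> simp [psi, cls, h, h2] <;> norm_num
  · rw [show ((⟨3, hk⟩ : Fin 4) : ℕ) = 3 from rfl, Matrix.smul_apply,
      A3_entry hreg hcn, smul_eq_mul]
    by_cases h : i = j
    · simp [psi, cls, h, (by rw [h]; exact G.loopless.irrefl j : ¬ G.Adj i j)]; norm_num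
    · by_cases h2 : G.Adj i j <;> simp [psi, cls, h, h2] <;> norm_num

lemma rwP_eq (hreg : G.IsRegularOfDegree 6)
    (hcn : ∀ i j : V, i ≠ j → Fintype.card (G.commonNeighbors i j) = 2) (i : V) :
    rwP G 4 i = psi 0 := by
  have := rwR_eq hreg hcn i i
  have hc : cls G i i = 0 := by rw [cls, if_pos rfl]
  rw [hc] at this
  exact this

/-- The classification multiset of an SRG(16,6,2,2): each vertex sees itself once, 6 neighbors
and 9 non-neighbors. -/
def clsM : Multiset (Fin 3) :=
  Multiset.replicate 1 0 + Multiset.replicate 6 1 + Multiset.replicate 9 2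

lemma rwR_multiset (hreg : G.IsRegularOfDegree 6)
    (hcn : ∀ i j : V, i ≠ j → Fintype.card (G.commonNeighbors i j) = 2)
    (hcls : ∀ v : V, Finset.univ.val.map (cls G v) = clsM) (v : V) :
    Finset.univ.val.map (rwR G 4 v) = Multiset.map psi clsM := by
  rw [Multiset.map_congr rfl (fun u _ => rwR_eq hreg hcn v u),
    show (fun u => psi (cls G v u)) = psi ∘ cls G v from rfl,
    ← Multiset.map_map, hcls v]

/-- If the node encodings are constant (with the same value on both sides) and every vertex sees
the same multiset of edge-encoding values, then SEG-WL cannot distinguish the two graphs. -/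
lemma not_segDistinguishes {V W X Y : Type} [Fintype V] [Fintype W]
    (fP : V → X) (fR : V → V → Y) (fP' : W → X) (fR' : W → W → Y)
    (c : X) (m : Multiset Y)
    (hP : ∀ v, fP v = c) (hP' : ∀ w, fP' w = c)
    (hR : ∀ v, Finset.univ.val.map (fR v) = m)
    (hR' : ∀ w, Finset.univ.val.map (fR' w) = m)
    (hcard : Fintype.card V = Fintype.card W) :
    ¬ segDistinguishes fP fR fP' fR' := by
  have key : ∀ t (v : V) (w : W), segColor fP fR t v = segColor fP' fR' t w := by
    intro t
    induction t with
    | zero => intro v w; show fP v = fP' w; rw [hP, hP']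
    | succ t ih =>
      intro v w
      show Finset.univ.val.map (fun u => (segColor fP fR t u, fR v u))
         = Finset.univ.val.map (fun u => (segColor fP' fR' t u, fR' w u))
      have h1 : ∀ u ∈ Finset.univ.val, (segColor fP fR t u, fR v u)
          = ((fun y => (segColor fP' fR' t w, y)) ∘ fR v) u := fun u _ => by
        simp only [Function.comp_apply, ih u w]
      have h2 : ∀ u ∈ Finset.univ.val, (segColor fP' fR' t u, fR' w u)
          = ((fun y => (segColor fP' fR' t w, y)) ∘ fR' w) u := fun u _ => by
        simp only [Function.comp_apply, (ih v u).symm.trans (ih v w)]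
      rw [Multiset.map_congr rfl h1, Multiset.map_congr rfl h2, ← Multiset.map_map,
        ← Multiset.map_map, hR, hR']
  rintro ⟨t, hne⟩
  apply hne
  rcases isEmpty_or_nonempty V with hV | hV
  · have hW : IsEmpty W := by
      rw [← Fintype.card_eq_zero_iff] at hV ⊢
      omega
    rw [Finset.univ_eq_empty (α := V), Finset.univ_eq_empty (α := W)]
    rfl
  · have hW : Nonempty W := by
      rw [← Fintype.card_pos_iff] at hV ⊢
      omega
    obtain ⟨w0⟩ := hW
    obtain ⟨v0⟩ := hV
    have e1 : Finset.univ.val.map (segColor fP fR t)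
        = Multiset.replicate (Fintype.card V) (segColor fP' fR' t w0) := by
      rw [Multiset.map_congr rfl (fun u _ => key t u w0), Multiset.map_const',
        ← Finset.card_univ, Finset.card_def]
    have e2 : Finset.univ.val.map (segColor fP' fR' t)
        = Multiset.replicate (Fintype.card W) (segColor fP' fR' t w0) := by
      rw [Multiset.map_congr rfl (fun u _ => (key t v0 u).symm.trans (key t v0 w0)),
        Multiset.map_const', ← Finset.card_univ, Finset.card_def]
    rw [e1, e2, hcard]

theorem rook_cls : ∀ v : Fin 16, Finset.univ.val.map (cls rookG v) = clsM := by
  unfold cls clsM; decide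

theorem shr_cls : ∀ v : Fin 16, Finset.univ.val.map (cls shrG v) = clsM := by
  unfold cls clsM; decide

lemma srg_hcn {G : SimpleGraph (Fin 16)} [DecidableRel G.Adj] (h : G.IsSRGWith 16 6 2 2) :
    ∀ i j : Fin 16, i ≠ j → Fintype.card (G.commonNeighbors i j) = 2 := by
  intro i j hij
  by_cases ha : G.Adj i j
  · exact h.of_adj i j ha
  · exact h.of_not_adj hij ha

end Aux

/-- There exist parameters `(n, k, l, m)` and two non-isomorphic strongly regular graphs with
those parameters that the RW(4)-SEG-WL test does not distinguish. -/
theorem exists_srg_pair_rw4_fails :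
    ∃ (n k l m : ℕ) (G H : SimpleGraph (Fin n)),
      G.IsSRGWith n k l m ∧ H.IsSRGWith n k l m ∧ ¬ Nonempty (G ≃g H) ∧
      ¬ rwSegDistinguishes 4 G H := by
  refine ⟨16, 6, 2, 2, rookG, shrG, ?_, ?_, ?_, ?_⟩
  · convert rook_srg using 2 <;> exact Subsingleton.elim _ _
  · convert shr_srg using 2 <;> exact Subsingleton.elim _ _
  · rintro ⟨e⟩
    have h01 : rookG.Adj 0 1 := by decide
    have h02 : rookG.Adj 0 2 := by decide
    have h03 : rookG.Adj 0 3 := by decide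
    have h12 : rookG.Adj 1 2 := by decide
    have h13 : rookG.Adj 1 3 := by decide
    have h23 : rookG.Adj 2 3 := by decide
    exact shr_noK4 (e 0) (e 1) (e.map_rel_iff.mpr h01) (e 2) (e.map_rel_iff.mpr h02)
      (e.map_rel_iff.mpr h12) (e 3) (e.map_rel_iff.mpr h03) (e.map_rel_iff.mpr h13)
      (e.map_rel_iff.mpr h23)
  · exact not_segDistinguishes _ _ _ _ (psi 0) (Multiset.map psi clsM)
      (rwP_eq rook_srg.regular (srg_hcn rook_srg))
      (rwP_eq shr_srg.regular (srg_hcn shr_srg))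
      (rwR_multiset rook_srg.regular (srg_hcn rook_srg) rook_cls)
      (rwR_multiset shr_srg.regular (srg_hcn shr_srg) shr_cls)
      rfl

end
end
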